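/- arXiv:1701.09050 — 2 statements merged into one kernel-verified Lean document; each statement's English description precedes it below -/
import Mathlib

section
/- For density operators ρ, ρ' and a Hermitian operator σ on a finite-dimensional Hilbert space, and any real c ≥ 0, we have Tr((ρ − cσ)₊) ≤ Tr((ρ' − cσ)₊) + (1/2)‖ρ − ρ'‖₁, where ‖·‖₁ is the trace norm and X₊ is the positive part of the Hermitian operator X. -/
open Matrix
open scoped ComplexOrder

open Classical in
/-- The positive part `A₊` of a Hermitian matrix `A`, defined via the spectral
decomposition (and `0` if `A` is not Hermitian). -/
noncomputable def posPartOf {n : Type*} [Fintype n] [DecidableEq n] (A : Matrix n n ℂ) :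
    Matrix n n ℂ :=
  if hA : A.IsHermitian then
    (hA.eigenvectorUnitary : Matrix n n ℂ) *
      Matrix.diagonal (fun i => ((max (hA.eigenvalues i) 0 : ℝ) : ℂ)) *
      (star (hA.eigenvectorUnitary : Matrix n n ℂ))
  else 0

open Classical in
/-- The negative part `A₋` of a Hermitian matrix `A` (so that `A = A₊ - A₋`). -/
noncomputable def negPartOf {n : Type*} [Fintype n] [DecidableEq n] (A : Matrix n n ℂ) :
    Matrix n n ℂ :=
  if hA : A.IsHermitian then
    (hA.eigenvectorUnitary : Matrix n n ℂ) *
      Matrix.diagonal (fun i => ((max (-(hA.eigenvalues i)) 0 : ℝ) : ℂ)) *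
      (star (hA.eigenvectorUnitary : Matrix n n ℂ))
  else 0

open Classical in
/-- The spectral projection `{A > 0}` onto the strictly positive eigenspaces of a
Hermitian matrix `A` (and `0` if `A` is not Hermitian). -/
noncomputable def posProjOf {n : Type*} [Fintype n] [DecidableEq n] (A : Matrix n n ℂ) :
    Matrix n n ℂ :=
  if hA : A.IsHermitian then
    (hA.eigenvectorUnitary : Matrix n n ℂ) *
      Matrix.diagonal (fun i => if 0 < hA.eigenvalues i then (1 : ℂ) else 0) *
      (star (hA.eigenvectorUnitary : Matrix n n ℂ))
  else 0

open Classical in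
/-- The trace norm of a Hermitian matrix: the sum of absolute values of eigenvalues. -/
noncomputable def traceNormOf {n : Type*} [Fintype n] [DecidableEq n] (A : Matrix n n ℂ) : ℝ :=
  if hA : A.IsHermitian then ∑ i, |hA.eigenvalues i| else 0

/-! Let `P` be the spectral projection of `X + Y` onto its positive eigenspaces, so that
`Tr (X + Y)₊ = Tr (X P) + Tr (Y P)`. For every `0 ≤ P ≤ 1` one has `Tr (X P) ≤ Tr X₊`, since
`Tr (X₋ P) ≥ 0` and `Tr (X₊ (1 - P)) ≥ 0`; hence `Tr (X + Y)₊ ≤ Tr X₊ + Tr Y₊`. Take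
`X = ρ' − cσ` and `Y = ρ − ρ'`: as `ρ − ρ'` is traceless, its positive and negative parts have
equal trace, so `Tr (ρ − ρ')₊ = ½ ‖ρ − ρ'‖₁`. -/

namespace Matrix

open scoped MatrixOrder

variable {n : Type*} [Fintype n] [DecidableEq n]

lemma posPartOf_eq_posPart {A : Matrix n n ℂ} (hA : A.IsHermitian) : posPartOf A = A⁺ := by
  rw [CFC.posPart_def, cfcₙ_eq_cfc, hA.cfc_eq, IsHermitian.cfc, posPartOf, dif_pos hA,
    Unitary.conjStarAlgAut_apply]
  rfl

lemma re_trace_mul_nonneg {M N : Matrix n n ℂ} (hM : 0 ≤ M) (hN : 0 ≤ N) :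
    0 ≤ (M * N).trace.re := by
  rw [← CFC.sqrt_mul_sqrt_self M hM, mul_assoc, trace_mul_comm]
  have hconj : 0 ≤ CFC.sqrt M * N * CFC.sqrt M :=
    conjugate_nonneg_of_nonneg hN (CFC.sqrt_nonneg M)
  exact (Complex.nonneg_iff.mp (nonneg_iff_posSemidef.mp hconj).trace_nonneg).1

lemma mul_cfc_ite_pos_eq_posPart {X : Matrix n n ℂ} (hX : IsSelfAdjoint X) :
    X * cfc (fun x : ℝ => if 0 < x then 1 else 0) X = X⁺ := by
  rw [CFC.posPart_def, cfcₙ_eq_cfc]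
  conv_lhs => enter [1]; rw [← cfc_id' ℝ X]
  rw [← cfc_mul (fun x => x) _ X continuousOn_id (X.finite_real_spectrum.continuousOn _)]
  refine cfc_congr fun x _ => ?_
  split_ifs with h
  · simp [h.le]
  · simp [not_lt.mp h]

lemma re_trace_mul_le_re_trace_posPart {X P : Matrix n n ℂ} (hX : IsSelfAdjoint X)
    (hP₀ : 0 ≤ P) (hP₁ : P ≤ 1) : (X * P).trace.re ≤ X⁺.trace.re := by
  have hneg : 0 ≤ (X⁻ * P).trace.re := re_trace_mul_nonneg (CFC.negPart_nonneg X) hP₀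
  have hpos : 0 ≤ (X⁺ * (1 - P)).trace.re :=
    re_trace_mul_nonneg (CFC.posPart_nonneg X) (sub_nonneg.mpr hP₁)
  conv_lhs => rw [← CFC.posPart_sub_negPart X]
  rw [mul_sub, mul_one, trace_sub, Complex.sub_re] at hpos
  rw [sub_mul, trace_sub, Complex.sub_re]
  linarith

lemma re_trace_posPart_add_le {X Y : Matrix n n ℂ} (hX : IsSelfAdjoint X)
    (hY : IsSelfAdjoint Y) : (X + Y)⁺.trace.re ≤ X⁺.trace.re + Y⁺.trace.re := by
  set P := cfc (fun x : ℝ => if 0 < x then 1 else 0) (X + Y)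
  have hP₀ : 0 ≤ P := cfc_nonneg fun x _ => by split_ifs <;> norm_num
  have hP₁ : P ≤ 1 := cfc_le_one _ _ fun x _ => by split_ifs <;> norm_num
  rw [← mul_cfc_ite_pos_eq_posPart (hX.add hY), add_mul, trace_add, Complex.add_re]
  exact add_le_add (re_trace_mul_le_re_trace_posPart hX hP₀ hP₁)
    (re_trace_mul_le_re_trace_posPart hY hP₀ hP₁)

lemma re_trace_posPartOf_eq_half_traceNormOf {X : Matrix n n ℂ} (hX : X.IsHermitian)
    (htr : X.trace = 0) : (posPartOf X).trace.re = 1 / 2 * traceNormOf X := by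
  have hsum : ∑ i, hX.eigenvalues i = 0 := by
    simpa [htr] using (congrArg Complex.re hX.trace_eq_sum_eigenvalues).symm
  have hmax (x : ℝ) : max x 0 = 1 / 2 * |x| + 1 / 2 * x := by
    linarith [max_zero_add_max_neg_zero_eq_abs_self x, max_zero_sub_max_neg_zero_eq_self x]
  rw [posPartOf, dif_pos hX, trace_mul_cycle, Unitary.coe_star_mul_self, one_mul, trace_diagonal,
    Complex.re_sum, traceNormOf, dif_pos hX]
  simp only [Complex.ofReal_re, hmax, Finset.sum_add_distrib, ← Finset.mul_sum, hsum, mul_zero,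
    add_zero]

end Matrix

theorem trace_posPart_continuity_general {n : Type*} [Fintype n] [DecidableEq n]
    (ρ ρ' σ : Matrix n n ℂ)
    (hρ : ρ.PosSemidef) (hρtr : ρ.trace = 1)
    (hρ' : ρ'.PosSemidef) (hρ'tr : ρ'.trace = 1)
    (hσ : σ.IsHermitian) (c : ℝ) :
    ((posPartOf (ρ - c • σ)).trace).re ≤
      ((posPartOf (ρ' - c • σ)).trace).re + (1 / 2) * traceNormOf (ρ - ρ') := by
  have hcσ : (c • σ).IsHermitian := hσ.smul (IsSelfAdjoint.all c)
  have hB : (ρ' - c • σ).IsHermitian := hρ'.1.sub hcσ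
  have hΔ : (ρ - ρ').IsHermitian := hρ.1.sub hρ'.1
  have hsplit : ρ - c • σ = (ρ' - c • σ) + (ρ - ρ') := by abel
  rw [← re_trace_posPartOf_eq_half_traceNormOf hΔ (by rw [trace_sub, hρtr, hρ'tr, sub_self]),
    posPartOf_eq_posPart (hρ.1.sub hcσ), posPartOf_eq_posPart hB, posPartOf_eq_posPart hΔ, hsplit]
  exact re_trace_posPart_add_le hB hΔ

/-- For density operators `ρ, ρ'`, a Hermitian `σ` and `c ≥ 0`,
`Tr (ρ − cσ)₊ ≤ Tr (ρ' − cσ)₊ + (1/2)‖ρ − ρ'‖₁`. -/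
theorem trace_posPart_continuity {n : Type*} [Fintype n] [DecidableEq n]
    (ρ ρ' σ : Matrix n n ℂ)
    (hρ : ρ.PosSemidef) (hρtr : ρ.trace = 1)
    (hρ' : ρ'.PosSemidef) (hρ'tr : ρ'.trace = 1)
    (hσ : σ.IsHermitian) (c : ℝ) (hc : 0 ≤ c) :
    ((posPartOf (ρ - c • σ)).trace).re ≤
      ((posPartOf (ρ' - c • σ)).trace).re + (1 / 2) * traceNormOf (ρ - ρ') :=
  trace_posPart_continuity_general ρ ρ' σ hρ hρtr hρ' hρ'tr hσ c
end

section
/- Let ρ̂ = {ρ_n} and ρ̂' = {ρ'_n} be sequences of density operators with lim_n ‖ρ_n − ρ'_n‖₁ = 0. Then for every ε ∈ [0,1], the spectral entropy rates coincide: H̲(ε|ρ̂) = H̲(ε|ρ̂') and H̄(ε|ρ̂) = H̄(ε|ρ̂'). -/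
open Matrix
open scoped ComplexOrder

/-- The spectral divergence rate `D̲(ε|ρ̂‖σ̂)`. -/
noncomputable def Dlow {ι : ℕ → Type*} [∀ n, Fintype (ι n)] [∀ n, DecidableEq (ι n)]
    (ε : ℝ) (ρ σ : ∀ n, Matrix (ι n) (ι n) ℂ) : ℝ :=
  sSup {a : ℝ | 1 - ε ≤
    Filter.liminf (fun n : ℕ =>
      ((ρ n * posProjOf (ρ n - Real.exp (n * a) • σ n)).trace).re) Filter.atTop}

/-- The spectral divergence rate `D̄(ε|ρ̂‖σ̂)`. -/
noncomputable def Dhigh {ι : ℕ → Type*} [∀ n, Fintype (ι n)] [∀ n, DecidableEq (ι n)]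
    (ε : ℝ) (ρ σ : ∀ n, Matrix (ι n) (ι n) ℂ) : ℝ :=
  sInf {a : ℝ |
    Filter.limsup (fun n : ℕ =>
      ((ρ n * posProjOf (ρ n - Real.exp (n * a) • σ n)).trace).re) Filter.atTop ≤ ε}

/-- The sup-spectral entropy rate `H̄(ε|ρ̂) = −D̲(ε|ρ̂‖Î)`. -/
noncomputable def Hbar {ι : ℕ → Type*} [∀ n, Fintype (ι n)] [∀ n, DecidableEq (ι n)]
    (ε : ℝ) (ρ : ∀ n, Matrix (ι n) (ι n) ℂ) : ℝ :=
  -(Dlow ε ρ (fun n => (1 : Matrix (ι n) (ι n) ℂ)))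

/-- The inf-spectral entropy rate `H̲(ε|ρ̂) = −D̄(ε|ρ̂‖Î)`. -/
noncomputable def Hlow {ι : ℕ → Type*} [∀ n, Fintype (ι n)] [∀ n, DecidableEq (ι n)]
    (ε : ℝ) (ρ : ∀ n, Matrix (ι n) (ι n) ℂ) : ℝ :=
  -(Dhigh ε ρ (fun n => (1 : Matrix (ι n) (ι n) ℂ)))

open Filter


section analysis

lemma my_liminf_le {g h e : ℕ → ℝ}
    (hg0 : ∀ n, 0 ≤ g n) (hg1 : ∀ n, g n ≤ 1)
    (hh0 : ∀ n, 0 ≤ h n)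
    (hle : ∀ n, h n ≤ g n + e n) (he : Tendsto e atTop (nhds 0)) :
    liminf h atTop ≤ liminf g atTop := by
  have hgb : IsBoundedUnder (· ≥ ·) atTop g := isBoundedUnder_of ⟨0, hg0⟩
  have hgb' : IsCoboundedUnder (· ≥ ·) atTop g :=
    IsBoundedUnder.isCoboundedUnder_ge (isBoundedUnder_of ⟨1, hg1⟩)
  refine le_of_forall_pos_le_add fun δ hδ => ?_
  have hev : ∀ᶠ n in atTop, h n ≤ g n + δ := by
    filter_upwards [he.eventually_le_const hδ] with n hn
    linarith [hle n]
  calc liminf h atTop ≤ liminf (fun n => g n + δ) atTop := by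
        exact liminf_le_liminf hev (isBoundedUnder_of ⟨0, hh0⟩)
          (IsBoundedUnder.isCoboundedUnder_ge
            (isBoundedUnder_of ⟨1 + δ, fun n => by linarith [hg1 n]⟩))
    _ = liminf g atTop + δ := liminf_add_const atTop g δ hgb' hgb

lemma my_limsup_le {g h e : ℕ → ℝ}
    (hg0 : ∀ n, 0 ≤ g n) (hg1 : ∀ n, g n ≤ 1)
    (hh0 : ∀ n, 0 ≤ h n)
    (hle : ∀ n, h n ≤ g n + e n) (he : Tendsto e atTop (nhds 0)) :
    limsup h atTop ≤ limsup g atTop := by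
  have hgb : IsBoundedUnder (· ≤ ·) atTop g := isBoundedUnder_of ⟨1, hg1⟩
  have hgb' : IsCoboundedUnder (· ≤ ·) atTop g :=
    IsBoundedUnder.isCoboundedUnder_le (isBoundedUnder_of ⟨0, hg0⟩)
  refine le_of_forall_pos_le_add fun δ hδ => ?_
  have hev : ∀ᶠ n in atTop, h n ≤ g n + δ := by
    filter_upwards [he.eventually_le_const hδ] with n hn
    linarith [hle n]
  calc limsup h atTop ≤ limsup (fun n => g n + δ) atTop := by
        refine limsup_le_limsup hev
          (IsBoundedUnder.isCoboundedUnder_le (isBoundedUnder_of ⟨0, hh0⟩))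
          (isBoundedUnder_of ⟨1 + δ, fun n => by linarith [hg1 n]⟩)
    _ = limsup g atTop + δ := limsup_add_const atTop g δ hgb hgb'

lemma my_sSup_le {S T : Set ℝ} (h1 : ∀ b ∈ T, ∀ a < b, a ∈ S)
    (h2 : ∀ b ∈ S, ∀ a < b, a ∈ T) : sSup S ≤ sSup T := by
  rcases S.eq_empty_or_nonempty with hS | hS
  · rcases T.eq_empty_or_nonempty with hT | hT
    · rw [hS, hT]
    · obtain ⟨t, ht⟩ := hT
      exact absurd (h1 t ht (t - 1) (by linarith)) (by simp [hS])
  · by_cases hT : BddAbove T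
    · refine csSup_le hS fun s hs => ?_
      by_contra hlt
      push_neg at hlt
      obtain ⟨a, ha1, ha2⟩ := exists_between hlt
      exact absurd (le_csSup hT (h2 s hs a ha2)) (not_le.mpr ha1)
    · have hSuniv : S = Set.univ := by
        ext x
        simp only [Set.mem_univ, iff_true]
        obtain ⟨t, ht, hxt⟩ := not_bddAbove_iff.mp hT x
        exact h1 t ht x hxt
      have hTuniv : T = Set.univ := by
        ext x
        simp only [Set.mem_univ, iff_true]
        have hnb : ¬ BddAbove S := by rw [hSuniv]; exact not_bddAbove_univ
        obtain ⟨s, hs, hxs⟩ := not_bddAbove_iff.mp hnb x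
        exact h2 s hs x hxs
      rw [hSuniv, hTuniv]

lemma my_sSup_eq {S T : Set ℝ} (h1 : ∀ b ∈ T, ∀ a < b, a ∈ S)
    (h2 : ∀ b ∈ S, ∀ a < b, a ∈ T) : sSup S = sSup T :=
  le_antisymm (my_sSup_le h1 h2) (my_sSup_le h2 h1)

lemma my_sInf_le {S T : Set ℝ} (h1 : ∀ b ∈ T, ∀ a, b < a → a ∈ S)
    (h2 : ∀ b ∈ S, ∀ a, b < a → a ∈ T) : sInf T ≤ sInf S := by
  rcases S.eq_empty_or_nonempty with hS | hS
  · rcases T.eq_empty_or_nonempty with hT | hT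
    · rw [hS, hT]
    · obtain ⟨t, ht⟩ := hT
      exact absurd (h1 t ht (t + 1) (by linarith)) (by simp [hS])
  · by_cases hT : BddBelow T
    · refine le_csInf hS fun s hs => ?_
      by_contra hlt
      push_neg at hlt
      obtain ⟨a, ha1, ha2⟩ := exists_between hlt
      exact absurd (csInf_le hT (h2 s hs a ha1)) (not_le.mpr ha2)
    · have hSuniv : S = Set.univ := by
        ext x
        simp only [Set.mem_univ, iff_true]
        obtain ⟨t, ht, hxt⟩ := not_bddBelow_iff.mp hT x
        exact h1 t ht x hxt
      have hTuniv : T = Set.univ := by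
        ext x
        simp only [Set.mem_univ, iff_true]
        have hnb : ¬ BddBelow S := by rw [hSuniv]; exact not_bddBelow_univ
        obtain ⟨s, hs, hxs⟩ := not_bddBelow_iff.mp hnb x
        exact h2 s hs x hxs
      rw [hSuniv, hTuniv]

lemma my_sInf_eq {S T : Set ℝ} (h1 : ∀ b ∈ T, ∀ a, b < a → a ∈ S)
    (h2 : ∀ b ∈ S, ∀ a, b < a → a ∈ T) : sInf S = sInf T :=
  le_antisymm (my_sInf_le h2 h1) (my_sInf_le h1 h2)

end analysis

section matrixlemmas
variable {m : Type*} [Fintype m] [DecidableEq m]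

lemma trace_conj_diag_mul (V : Matrix m m ℂ) (d : m → ℂ) (Q : Matrix m m ℂ) :
    (V * Matrix.diagonal d * star V * Q).trace = ∑ i, d i * (star V * Q * V) i i := by
  rw [mul_assoc (V * Matrix.diagonal d) (star V) Q, Matrix.trace_mul_comm, ← mul_assoc,
    Matrix.trace_mul_comm, mul_assoc]
  simp [Matrix.trace, Matrix.diag, Matrix.diagonal_mul, mul_assoc]

lemma psd_diag (Q : Matrix m m ℂ) (hQ : Q.PosSemidef) (i : m) :
    0 ≤ (Q i i).re ∧ (Q i i).im = 0 := by
  have h := hQ.dotProduct_mulVec_nonneg (Pi.single i 1)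
  have heq : dotProduct (star (Pi.single i 1 : m → ℂ)) (Q *ᵥ Pi.single i 1) = Q i i := by
    rw [Matrix.mulVec_single]
    have : star (Pi.single i 1 : m → ℂ) = Pi.single i 1 := by
      ext j; by_cases h : j = i <;> simp [Pi.single_apply, h]
    rw [this, single_dotProduct]
    simp
  rw [heq] at h
  rw [Complex.le_def] at h
  exact ⟨by simpa using h.1, by simpa using h.2.symm⟩

end matrixlemmas

section matrixlemmas2
variable {m : Type*} [Fintype m] [DecidableEq m]

lemma re_trace_mul_bounds {M : Matrix m m ℂ} (hM : M.IsHermitian) {Q : Matrix m m ℂ}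
    (hQ : Q.PosSemidef) (hQ1 : ((1 : Matrix m m ℂ) - Q).PosSemidef) :
    -(∑ i, max (-hM.eigenvalues i) 0) ≤ ((M * Q).trace).re ∧
      ((M * Q).trace).re ≤ ∑ i, max (hM.eigenvalues i) 0 := by
  set V : Matrix m m ℂ := (hM.eigenvectorUnitary : Matrix m m ℂ) with hV
  have hVs : star V * V = 1 := Matrix.UnitaryGroup.star_mul_self _
  have hform : (M * Q).trace = ∑ i, (hM.eigenvalues i : ℂ) * (star V * Q * V) i i := by
    conv_lhs => rw [hM.spectral_theorem, Unitary.conjStarAlgAut_apply]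
    rw [trace_conj_diag_mul]
    simp [Function.comp, hV]
  have hps : (star V * Q * V).PosSemidef := by
    have h := hQ.mul_mul_conjTranspose_same (star V)
    rwa [Matrix.star_eq_conjTranspose, Matrix.conjTranspose_conjTranspose] at h
  have hps1 : ((1 : Matrix m m ℂ) - star V * Q * V).PosSemidef := by
    have h := hQ1.mul_mul_conjTranspose_same (star V)
    rw [Matrix.star_eq_conjTranspose, Matrix.conjTranspose_conjTranspose] at h
    have heq : star V * ((1 : Matrix m m ℂ) - Q) * V = 1 - star V * Q * V := by
      rw [mul_sub, sub_mul, mul_one, hVs]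
    rw [← Matrix.star_eq_conjTranspose] at h
    rwa [heq] at h
  have hdiag : ∀ i, 0 ≤ ((star V * Q * V) i i).re ∧ ((star V * Q * V) i i).re ≤ 1 := by
    intro i
    refine ⟨(psd_diag _ hps i).1, ?_⟩
    have h := (psd_diag _ hps1 i).1
    have : (((1 : Matrix m m ℂ) - star V * Q * V) i i).re = 1 - ((star V * Q * V) i i).re := by
      simp [Matrix.sub_apply, Matrix.one_apply_eq]
    linarith [this ▸ h]
  have hre : ((M * Q).trace).re = ∑ i, hM.eigenvalues i * ((star V * Q * V) i i).re := by
    rw [hform, Complex.re_sum]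
    exact Finset.sum_congr rfl fun i _ => Complex.re_ofReal_mul _ _
  rw [hre]
  constructor
  · rw [← Finset.sum_neg_distrib]
    refine Finset.sum_le_sum fun i _ => ?_
    obtain ⟨h0, h1⟩ := hdiag i
    rcases le_total (hM.eigenvalues i) 0 with h | h <;>
      nlinarith [le_max_left (-hM.eigenvalues i) 0, le_max_right (-hM.eigenvalues i) 0]
  · refine Finset.sum_le_sum fun i _ => ?_
    obtain ⟨h0, h1⟩ := hdiag i
    rcases le_total (hM.eigenvalues i) 0 with h | h <;>
      nlinarith [le_max_left (hM.eigenvalues i) 0, le_max_right (hM.eigenvalues i) 0]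

lemma trace_eq_sum_eigen {M : Matrix m m ℂ} (hM : M.IsHermitian) :
    M.trace = ∑ i, (hM.eigenvalues i : ℂ) := by
  conv_lhs => rw [hM.spectral_theorem, Unitary.conjStarAlgAut_apply]
  rw [Matrix.trace_mul_cycle, Matrix.UnitaryGroup.star_mul_self, one_mul, Matrix.trace_diagonal]
  simp [Function.comp]

end matrixlemmas2

section posproj
variable {m : Type*} [Fintype m] [DecidableEq m]

lemma posProjOf_eq {H : Matrix m m ℂ} (hH : H.IsHermitian) :
    posProjOf H = (hH.eigenvectorUnitary : Matrix m m ℂ) *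
      Matrix.diagonal (fun i => if 0 < hH.eigenvalues i then (1 : ℂ) else 0) *
      (star (hH.eigenvectorUnitary : Matrix m m ℂ)) := by
  rw [posProjOf, dif_pos hH]

lemma posProjOf_posSemidef {H : Matrix m m ℂ} (hH : H.IsHermitian) :
    (posProjOf H).PosSemidef := by
  rw [posProjOf_eq hH]
  have hd : (0 : m → ℂ) ≤ fun i => if 0 < hH.eigenvalues i then (1 : ℂ) else 0 := by
    intro i; dsimp; split <;> simp
  have h := (Matrix.PosSemidef.diagonal hd).mul_mul_conjTranspose_same
    (hH.eigenvectorUnitary : Matrix m m ℂ)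
  rwa [← Matrix.star_eq_conjTranspose] at h

lemma one_sub_posProjOf_posSemidef {H : Matrix m m ℂ} (hH : H.IsHermitian) :
    ((1 : Matrix m m ℂ) - posProjOf H).PosSemidef := by
  set V : Matrix m m ℂ := (hH.eigenvectorUnitary : Matrix m m ℂ) with hV
  have hsV : V * star V = 1 := Matrix.mem_unitaryGroup_iff.mp hH.eigenvectorUnitary.2
  rw [posProjOf_eq hH]
  have h1 : (1 : Matrix m m ℂ) - V * Matrix.diagonal (fun i => if 0 < hH.eigenvalues i then (1 : ℂ) else 0) * star V
      = V * Matrix.diagonal (fun i => 1 - if 0 < hH.eigenvalues i then (1 : ℂ) else 0) * star V := by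
    have hone : (1 : Matrix m m ℂ) = V * Matrix.diagonal (fun _ : m => (1:ℂ)) * star V := by
      rw [Matrix.diagonal_one, mul_one, hsV]
    rw [← Matrix.diagonal_sub]
    conv_lhs => rw [hone]
    rw [← Matrix.sub_mul, ← Matrix.mul_sub]
  rw [h1]
  have hd : (0 : m → ℂ) ≤ fun i => 1 - if 0 < hH.eigenvalues i then (1 : ℂ) else 0 := by
    intro i; dsimp; split <;> simp
  have h := (Matrix.PosSemidef.diagonal hd).mul_mul_conjTranspose_same V
  rwa [← Matrix.star_eq_conjTranspose] at h

lemma trace_posProjOf_re {H : Matrix m m ℂ} (hH : H.IsHermitian) :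
    ((posProjOf H).trace).re = ∑ i, (if 0 < hH.eigenvalues i then (1:ℝ) else 0) := by
  rw [posProjOf_eq hH, Matrix.trace_mul_cycle, Matrix.UnitaryGroup.star_mul_self, one_mul,
    Matrix.trace_diagonal]
  rw [Complex.re_sum]
  exact Finset.sum_congr rfl fun i _ => by split <;> simp

lemma trace_mul_posProjOf_re {H : Matrix m m ℂ} (hH : H.IsHermitian) :
    ((H * posProjOf H).trace).re = ∑ i, max (hH.eigenvalues i) 0 := by
  set V : Matrix m m ℂ := (hH.eigenvectorUnitary : Matrix m m ℂ) with hV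
  have hVs : star V * V = 1 := Matrix.UnitaryGroup.star_mul_self _
  have hform : (H * posProjOf H).trace
      = ∑ i, (hH.eigenvalues i : ℂ) * (star V * posProjOf H * V) i i := by
    rw [congrArg (fun X => (X * posProjOf H).trace) hH.spectral_theorem, Unitary.conjStarAlgAut_apply, trace_conj_diag_mul]
    simp [Function.comp, hV]
  have hmid : star V * posProjOf H * V
      = Matrix.diagonal (fun i => if 0 < hH.eigenvalues i then (1 : ℂ) else 0) := by
    rw [posProjOf_eq hH, ← hV, ← mul_assoc, ← mul_assoc, hVs, one_mul, mul_assoc, hVs, mul_one]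
  rw [hform, hmid, Complex.re_sum]
  refine Finset.sum_congr rfl fun i _ => ?_
  rw [Matrix.diagonal_apply_eq]
  rcases lt_or_ge 0 (hH.eigenvalues i) with h | h
  · simp [if_pos h, max_eq_left h.le]
  · simp [if_neg (not_lt.mpr h), max_eq_right h]

end posproj

section master
variable {m : Type*} [Fintype m] [DecidableEq m]

lemma herm_sub_smul {A : Matrix m m ℂ} (hA : A.IsHermitian) (r : ℝ) :
    (A - r • (1 : Matrix m m ℂ)).IsHermitian := by
  have h1 : (r • (1 : Matrix m m ℂ)).IsHermitian := by
    simp [Matrix.IsHermitian, Matrix.conjTranspose_smul, star_trivial]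
  exact hA.sub h1

lemma expand_re (M : Matrix m m ℂ) (r : ℝ) (Q : Matrix m m ℂ) :
    ((M * Q).trace).re = (((M - r • (1 : Matrix m m ℂ)) * Q).trace).re + r * (Q.trace).re := by
  have h : M * Q = (M - r • (1 : Matrix m m ℂ)) * Q + r • Q := by
    rw [Matrix.sub_mul, Matrix.smul_mul, one_mul, sub_add_cancel]
  rw [h, Matrix.trace_add, Matrix.trace_smul, Complex.add_re, Complex.real_smul,
    Complex.re_ofReal_mul]

lemma sum_eig_eq_one {A : Matrix m m ℂ} (hA : A.IsHermitian) (hAt : A.trace = 1) :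
    ∑ i, hA.eigenvalues i = 1 := by
  have h := trace_eq_sum_eigen hA
  rw [hAt] at h
  have := congrArg Complex.re h.symm
  rw [Complex.re_sum] at this
  simpa using this

lemma F_bounds {A : Matrix m m ℂ} (hA : A.PosSemidef) (hAt : A.trace = 1) (r : ℝ) :
    0 ≤ ((A * posProjOf (A - r • (1 : Matrix m m ℂ))).trace).re ∧
      ((A * posProjOf (A - r • (1 : Matrix m m ℂ))).trace).re ≤ 1 := by
  have hH := herm_sub_smul hA.1 r
  have hb := re_trace_mul_bounds hA.1 (posProjOf_posSemidef hH) (one_sub_posProjOf_posSemidef hH)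
  constructor
  · refine le_trans ?_ hb.1
    have : ∑ i, max (-hA.1.eigenvalues i) 0 = 0 :=
      Finset.sum_eq_zero fun i _ => max_eq_right (neg_nonpos.mpr (hA.eigenvalues_nonneg i))
    rw [this, neg_zero]
  · refine hb.2.trans ?_
    have : ∑ i, max (hA.1.eigenvalues i) 0 = ∑ i, hA.1.eigenvalues i :=
      Finset.sum_congr rfl fun i _ => max_eq_left (hA.eigenvalues_nonneg i)
    rw [this, sum_eig_eq_one hA.1 hAt]

lemma master {A B : Matrix m m ℂ} (hA : A.PosSemidef) (hAt : A.trace = 1)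
    (hB : B.PosSemidef) (hBt : B.trace = 1) {c d : ℝ} (hc : 0 < c) (hd : 0 < d) :
    ((B * posProjOf (B - d • (1 : Matrix m m ℂ))).trace).re ≤
      ((A * posProjOf (A - c • (1 : Matrix m m ℂ))).trace).re + traceNormOf (A - B) + c / d := by
  have hH := herm_sub_smul hA.1 c
  have hK := herm_sub_smul hB.1 d
  set P := posProjOf (A - c • (1 : Matrix m m ℂ)) with hPdef
  set Q := posProjOf (B - d • (1 : Matrix m m ℂ)) with hQdef
  have hQps := posProjOf_posSemidef hK
  have hQ1 := one_sub_posProjOf_posSemidef hK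
  -- A side
  have e1 : ((A * P).trace).re = (((A - c • (1:Matrix m m ℂ)) * P).trace).re + c * (P.trace).re :=
    expand_re A c P
  have e2 : (((A - c • (1:Matrix m m ℂ)) * P).trace).re = ∑ i, max (hH.eigenvalues i) 0 :=
    trace_mul_posProjOf_re hH
  have e3 : 0 ≤ (P.trace).re := by
    rw [hPdef, trace_posProjOf_re hH]
    exact Finset.sum_nonneg fun i _ => by split <;> norm_num
  -- Q side
  have e4 : ((B * Q).trace).re = (((B - d • (1:Matrix m m ℂ)) * Q).trace).re + d * (Q.trace).re :=
    expand_re B d Q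
  have e5 : (((B - d • (1:Matrix m m ℂ)) * Q).trace).re = ∑ i, max (hK.eigenvalues i) 0 :=
    trace_mul_posProjOf_re hK
  have e5' : 0 ≤ ∑ i, max (hK.eigenvalues i) 0 :=
    Finset.sum_nonneg fun i _ => le_max_right _ _
  have e6 : ((B * Q).trace).re ≤ 1 := by
    have hb := (re_trace_mul_bounds hB.1 hQps hQ1).2
    refine hb.trans ?_
    have : ∑ i, max (hB.1.eigenvalues i) 0 = ∑ i, hB.1.eigenvalues i :=
      Finset.sum_congr rfl fun i _ => max_eq_left (hB.eigenvalues_nonneg i)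
    rw [this, sum_eig_eq_one hB.1 hBt]
  have e7 : 0 ≤ (Q.trace).re := by
    rw [hQdef, trace_posProjOf_re hK]
    exact Finset.sum_nonneg fun i _ => by split <;> norm_num
  have e8 : (Q.trace).re ≤ 1 / d := by
    rw [le_div_iff₀ hd, mul_comm]
    nlinarith [e4, e5, e5', e6]
  -- mid chain
  have mid1 : (((A - c • (1:Matrix m m ℂ)) * Q).trace).re ≤ ∑ i, max (hH.eigenvalues i) 0 :=
    (re_trace_mul_bounds hH hQps hQ1).2
  have mid2 : ((A * Q).trace).re = (((A - c • (1:Matrix m m ℂ)) * Q).trace).re + c * (Q.trace).re :=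
    expand_re A c Q
  have hAB : (A - B).IsHermitian := hA.1.sub hB.1
  have mid3 : -(traceNormOf (A - B)) ≤ (((A - B) * Q).trace).re := by
    have hb := (re_trace_mul_bounds hAB hQps hQ1).1
    refine le_trans ?_ hb
    rw [traceNormOf, dif_pos hAB, neg_le_neg_iff]
    exact Finset.sum_le_sum fun i _ => max_le (neg_le_abs _) (abs_nonneg _)
  have split : ((B * Q).trace).re = ((A * Q).trace).re - (((A - B) * Q).trace).re := by
    rw [← Complex.sub_re, ← Matrix.trace_sub, ← Matrix.sub_mul]
    norm_num
  have hcd : c * (Q.trace).re ≤ c / d := by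
    rw [div_eq_mul_one_div]
    exact mul_le_mul_of_nonneg_left e8 hc.le
  linarith [mid1, mid2, mid3, split, e1, e2, e3, mul_nonneg hc.le e3]
end master

section tnneg
variable {m : Type*} [Fintype m] [DecidableEq m]

lemma traceNormOf_formula {N : Matrix m m ℂ} (hN : N.IsHermitian) :
    traceNormOf N = 2 * (∑ i, max (hN.eigenvalues i) 0) - (N.trace).re := by
  have htr : (N.trace).re = ∑ i, hN.eigenvalues i := by
    have := congrArg Complex.re (trace_eq_sum_eigen hN)
    rw [Complex.re_sum] at this
    simpa using this
  rw [traceNormOf, dif_pos hN, htr, Finset.mul_sum, ← Finset.sum_sub_distrib]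
  refine Finset.sum_congr rfl fun i _ => ?_
  rcases le_total (hN.eigenvalues i) 0 with h | h
  · rw [abs_of_nonpos h, max_eq_right h]; ring
  · rw [abs_of_nonneg h, max_eq_left h]; ring

lemma traceNormOf_neg {M : Matrix m m ℂ} (hM : M.IsHermitian) :
    traceNormOf (-M) = traceNormOf M := by
  suffices h : ∀ (N : Matrix m m ℂ), N.IsHermitian → traceNormOf (-N) ≤ traceNormOf N by
    have h2 := h (-M) hM.neg
    rw [neg_neg] at h2
    exact le_antisymm (h M hM) h2
  intro N hN
  have hNN : (-N).IsHermitian := hN.neg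
  set P := posProjOf (-N) with hPdef
  have hPps := posProjOf_posSemidef hNN
  have hP1 := one_sub_posProjOf_posSemidef hNN
  have hQ1 : ((1 : Matrix m m ℂ) - ((1 : Matrix m m ℂ) - P)).PosSemidef := by
    rwa [sub_sub_cancel]
  have hs1 : ∑ i, max (hNN.eigenvalues i) 0 = -((N * P).trace).re := by
    have := trace_mul_posProjOf_re hNN
    rw [← hPdef] at this
    rw [← this, Matrix.neg_mul, Matrix.trace_neg, Complex.neg_re]
  have w : ((N * ((1 : Matrix m m ℂ) - P)).trace).re ≤ ∑ i, max (hN.eigenvalues i) 0 :=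
    (re_trace_mul_bounds hN hP1 hQ1).2
  have hsplit : ((N * ((1 : Matrix m m ℂ) - P)).trace).re = (N.trace).re - ((N * P).trace).re := by
    rw [Matrix.mul_sub, mul_one, Matrix.trace_sub, Complex.sub_re]
  rw [traceNormOf_formula hNN, traceNormOf_formula hN, hs1, Matrix.trace_neg, Complex.neg_re]
  linarith [w, hsplit]

end tnneg

/-- Continuity of the spectral entropy rates: asymptotically trace-norm-equal sequences
of density operators have the same spectral entropy rates. -/
theorem spectralEntropy_continuity {ι : ℕ → Type*}
    [∀ n, Fintype (ι n)] [∀ n, DecidableEq (ι n)]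
    (ρ ρ' : ∀ n, Matrix (ι n) (ι n) ℂ)
    (hρ : ∀ n, (ρ n).PosSemidef) (hρtr : ∀ n, (ρ n).trace = 1)
    (hρ' : ∀ n, (ρ' n).PosSemidef) (hρ'tr : ∀ n, (ρ' n).trace = 1)
    (hclose : Filter.Tendsto (fun n => traceNormOf (ρ n - ρ' n)) Filter.atTop (nhds 0))
    (ε : ℝ) (hε : ε ∈ Set.Icc (0 : ℝ) 1) :
    Hlow ε ρ = Hlow ε ρ' ∧ Hbar ε ρ = Hbar ε ρ' := by
  
  have hexp : ∀ a b : ℝ, a < b → Tendsto (fun n : ℕ => Real.exp (↑n * (a - b))) atTop (nhds 0) := by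
    intro a b hab
    have h1 : ∀ n : ℕ, Real.exp (↑n * (a - b)) = Real.exp (a - b) ^ n := fun n => by
      rw [← Real.exp_nat_mul]
    simp only [h1]
    exact tendsto_pow_atTop_nhds_zero_of_lt_one (Real.exp_pos _).le
      (Real.exp_lt_one_iff.mpr (by linarith))
  have hclose' : Tendsto (fun n => traceNormOf (ρ' n - ρ n)) atTop (nhds 0) := by
    have h : ∀ n, traceNormOf (ρ' n - ρ n) = traceNormOf (ρ n - ρ' n) := fun n => by
      rw [← neg_sub, traceNormOf_neg ((hρ n).1.sub (hρ' n).1)]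
    simpa only [h] using hclose
  -- pointwise master inequality
  have seq : ∀ (τ τ' : ∀ n, Matrix (ι n) (ι n) ℂ), (∀ n, (τ n).PosSemidef) →
      (∀ n, (τ n).trace = 1) → (∀ n, (τ' n).PosSemidef) → (∀ n, (τ' n).trace = 1) →
      ∀ a b : ℝ, ∀ n : ℕ,
      ((τ' n * posProjOf (τ' n - Real.exp (↑n * b) • (1 : Matrix (ι n) (ι n) ℂ))).trace).re ≤
        ((τ n * posProjOf (τ n - Real.exp (↑n * a) • (1 : Matrix (ι n) (ι n) ℂ))).trace).re +
          (traceNormOf (τ n - τ' n) + Real.exp (↑n * (a - b))) := by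
    intro τ τ' h1 h2 h3 h4 a b n
    have hm := master (h1 n) (h2 n) (h3 n) (h4 n)
      (Real.exp_pos ((n : ℝ) * a)) (Real.exp_pos ((n : ℝ) * b))
    have hdiv : Real.exp ((n:ℝ) * a) / Real.exp ((n:ℝ) * b) = Real.exp ((n:ℝ) * (a - b)) := by
      rw [← Real.exp_sub]; ring_nf
    rw [hdiv] at hm
    linarith [hm]
  -- liminf / limsup comparison
  have crossInf : ∀ (τ τ' : ∀ n, Matrix (ι n) (ι n) ℂ), (∀ n, (τ n).PosSemidef) →
      (∀ n, (τ n).trace = 1) → (∀ n, (τ' n).PosSemidef) → (∀ n, (τ' n).trace = 1) →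
      Tendsto (fun n => traceNormOf (τ n - τ' n)) atTop (nhds 0) →
      ∀ a b : ℝ, a < b →
      liminf (fun n : ℕ =>
          ((τ' n * posProjOf (τ' n - Real.exp (↑n * b) • (1 : Matrix (ι n) (ι n) ℂ))).trace).re)
          atTop ≤
        liminf (fun n : ℕ =>
          ((τ n * posProjOf (τ n - Real.exp (↑n * a) • (1 : Matrix (ι n) (ι n) ℂ))).trace).re)
          atTop := by
    intro τ τ' h1 h2 h3 h4 hcl a b hab
    refine my_liminf_le (fun n => (F_bounds (h1 n) (h2 n) _).1)
      (fun n => (F_bounds (h1 n) (h2 n) _).2) (fun n => (F_bounds (h3 n) (h4 n) _).1)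
      (seq τ τ' h1 h2 h3 h4 a b) ?_
    simpa using hcl.add (hexp a b hab)
  have crossSup : ∀ (τ τ' : ∀ n, Matrix (ι n) (ι n) ℂ), (∀ n, (τ n).PosSemidef) →
      (∀ n, (τ n).trace = 1) → (∀ n, (τ' n).PosSemidef) → (∀ n, (τ' n).trace = 1) →
      Tendsto (fun n => traceNormOf (τ n - τ' n)) atTop (nhds 0) →
      ∀ a b : ℝ, a < b →
      limsup (fun n : ℕ =>
          ((τ' n * posProjOf (τ' n - Real.exp (↑n * b) • (1 : Matrix (ι n) (ι n) ℂ))).trace).re)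
          atTop ≤
        limsup (fun n : ℕ =>
          ((τ n * posProjOf (τ n - Real.exp (↑n * a) • (1 : Matrix (ι n) (ι n) ℂ))).trace).re)
          atTop := by
    intro τ τ' h1 h2 h3 h4 hcl a b hab
    refine my_limsup_le (fun n => (F_bounds (h1 n) (h2 n) _).1)
      (fun n => (F_bounds (h1 n) (h2 n) _).2) (fun n => (F_bounds (h3 n) (h4 n) _).1)
      (seq τ τ' h1 h2 h3 h4 a b) ?_
    simpa using hcl.add (hexp a b hab)
  constructor
  · -- Hlow via Dhigh and sInf
    have : Dhigh ε ρ (fun n => (1 : Matrix (ι n) (ι n) ℂ)) =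
        Dhigh ε ρ' (fun n => (1 : Matrix (ι n) (ι n) ℂ)) := by
      rw [Dhigh, Dhigh]
      refine my_sInf_eq ?_ ?_
      · intro b hb a hba
        simp only [Set.mem_setOf_eq] at hb ⊢
        exact le_trans (crossSup ρ' ρ hρ' hρ'tr hρ hρtr hclose' b a hba) hb
      · intro b hb a hba
        simp only [Set.mem_setOf_eq] at hb ⊢
        exact le_trans (crossSup ρ ρ' hρ hρtr hρ' hρ'tr hclose b a hba) hb
    rw [Hlow, Hlow, this]
  · have : Dlow ε ρ (fun n => (1 : Matrix (ι n) (ι n) ℂ)) =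
        Dlow ε ρ' (fun n => (1 : Matrix (ι n) (ι n) ℂ)) := by
      rw [Dlow, Dlow]
      refine my_sSup_eq ?_ ?_
      · intro b hb a hab
        simp only [Set.mem_setOf_eq] at hb ⊢
        exact le_trans hb (crossInf ρ ρ' hρ hρtr hρ' hρ'tr hclose a b hab)
      · intro b hb a hab
        simp only [Set.mem_setOf_eq] at hb ⊢
        exact le_trans hb (crossInf ρ' ρ hρ' hρ'tr hρ hρtr hclose' a b hab)
    rw [Hbar, Hbar, this]
end
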